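/- arXiv:1404.4225 — 4 statements merged into one kernel-verified Lean document; each statement's English description precedes it below -/
import Mathlib

section
/- Let (Ω, F, P) be a probability space, let (D, 𝒜, μ) be a σ-finite measure space, and let X : D × Ω → ℝ be jointly measurable. Suppose that for each x ∈ D the law of the random variable ω ↦ X(x, ω) under P has a strictly positive density φ_x with respect to Lebesgue measure on ℝ, with (x, y) ↦ φ_x(y) jointly measurable. Let (x, y) ↦ g_x(y) be a jointly measurable nonnegative function such that ∫_ℝ g_x(y) dy = 1 for every x ∈ D, and let h : D → [0, ∞) be measurable with ∫_D h dμ = 1. Then the likelihood-ratio function L(ω) = ∫_D h(x) g_x(X(x, ω))/φ_x(X(x, ω)) dμ(x) satisfies ∫_Ω L dP = 1; in other words, L is a probability density with respect to P and dQ = L dP defines a probability measure Q on (Ω, F). -/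
open MeasureTheory

/-- **The likelihood ratio of the change of measure integrates to one.**
If for each location `x ∈ D` the marginal law of the field `X(x,·)` under `P`
has a strictly positive density `φ_x` w.r.t. Lebesgue measure, `g_x` is a
probability density on `ℝ` for each `x`, and `h` is a probability density on
`D`, then `L(ω) = ∫_D h(x) g_x(X(x,ω))/φ_x(X(x,ω)) dμ(x)` satisfies
`∫_Ω L dP = 1`, so `dQ = L dP` defines a probability measure. -/
theorem likelihood_ratio_integrates_to_one
    {Ω D : Type*} [MeasurableSpace Ω] [MeasurableSpace D]
    (P : Measure Ω) [IsProbabilityMeasure P]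
    (μ : Measure D) [SigmaFinite μ]
    (X : D → Ω → ℝ) (hX : Measurable (Function.uncurry X))
    (φ : D → ℝ → ℝ) (hφmeas : Measurable (Function.uncurry φ))
    (hφpos : ∀ x y, 0 < φ x y)
    (hφlaw : ∀ x, P.map (X x) =
      volume.withDensity fun y => ENNReal.ofReal (φ x y))
    (g : D → ℝ → ℝ) (hgmeas : Measurable (Function.uncurry g))
    (hgnn : ∀ x y, 0 ≤ g x y)
    (hgint : ∀ x, ∫ y, g x y = 1)
    (h : D → ℝ) (hhmeas : Measurable h) (hhnn : ∀ x, 0 ≤ h x)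
    (hhint : ∫ x, h x ∂μ = 1) :
    ∫⁻ ω, (∫⁻ x, ENNReal.ofReal (h x * g x (X x ω) / φ x (X x ω)) ∂μ) ∂P = 1 := by
  have hXx : ∀ x, Measurable (X x) := fun x => hX.of_uncurry_left
  -- measurability of the integrand on Ω × D
  have hmeas2 : Measurable fun p : Ω × D =>
      ENNReal.ofReal (h p.2 * g p.2 (X p.2 p.1) / φ p.2 (X p.2 p.1)) := by
    have hXp : Measurable fun p : Ω × D => X p.2 p.1 :=
      hX.comp measurable_swap
    exact ((((hhmeas.comp measurable_snd).mul
      (hgmeas.comp (measurable_snd.prodMk hXp))).div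
      (hφmeas.comp (measurable_snd.prodMk hXp))).ennreal_ofReal)
  rw [lintegral_lintegral_swap hmeas2.aemeasurable]
  have key : ∀ x, ∫⁻ ω, ENNReal.ofReal (h x * g x (X x ω) / φ x (X x ω)) ∂P
      = ENNReal.ofReal (h x) := by
    intro x
    have hgx : Measurable (g x) := hgmeas.of_uncurry_left
    have hφx : Measurable (φ x) := hφmeas.of_uncurry_left
    have hf : Measurable fun y => ENNReal.ofReal (h x * g x y / φ x y) :=
      (((measurable_const.mul hgx).div hφx).ennreal_ofReal)
    rw [← lintegral_map hf (hXx x), hφlaw x,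
      lintegral_withDensity_eq_lintegral_mul _ (hφx.ennreal_ofReal) hf]
    have heq : ∀ y, ((fun y => ENNReal.ofReal (φ x y)) *
        fun y => ENNReal.ofReal (h x * g x y / φ x y)) y
        = ENNReal.ofReal (h x) * ENNReal.ofReal (g x y) := by
      intro y
      simp only [Pi.mul_apply]
      rw [← ENNReal.ofReal_mul (hφpos x y).le, ← ENNReal.ofReal_mul (hhnn x),
        mul_comm (φ x y), div_mul_cancel₀ _ (hφpos x y).ne']
    simp only [heq]
    rw [lintegral_const_mul _ hgx.ennreal_ofReal]
    have hgi : Integrable (g x) := by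
      by_contra hni
      have := hgint x
      rw [integral_undef hni] at this
      exact one_ne_zero this.symm
    rw [← ofReal_integral_eq_lintegral_ofReal hgi
      (Filter.Eventually.of_forall (hgnn x)), hgint x]
    simp
  simp only [key]
  have hhi : Integrable h μ := by
    by_contra hni
    rw [integral_undef hni] at hhint
    exact one_ne_zero hhint.symm
  rw [← ofReal_integral_eq_lintegral_ofReal hhi
    (Filter.Eventually.of_forall hhnn), hhint]
  simp
end

section
/- Let X be a standard Gaussian random variable (mean 0, variance 1). Then the conditional overshoot variance above a high level l satisfies lim_{l → ∞} l² · Var(X − l | X > l) = 1, where Var(X − l | X > l) = E[(X − l)² | X > l] − (E[X − l | X > l])², with conditional expectations defined as E[ψ(X) | X > l] = (∫_l^∞ ψ(y) φ(y) dy)/P(X > l) and φ the standard Gaussian density. In particular, the conditional variance of the overshoot is asymptotically l⁻². -/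
/-!
Write `T(l) = ∫_l^∞ φ` and `R(l) = T(l)/φ(l)` for the Mills ratio. From `φ' = -yφ`,
integration by parts gives `∫_l^∞ yφ = φ(l)` and `∫_l^∞ y²φ = lφ(l) + T(l)`, so the conditional
overshoot variance is `1 + l/R - 1/R²`.

Since `(-φP)' = φ(yP - P')`, any `P → 0` with `yP - P' ≥ 1` bounds `R` from above, and any
with `0 ≤ yP - P' ≤ 1` bounds it from below. The truncations `1/l - 1/l³ + 3/l⁵` and
`1/l - 1/l³ + 3/l⁵ - 15/l⁷` of the asymptotic series of `R` give
`lR = 1 - l⁻² + 3l⁻⁴ + o(l⁻⁴)`. Finally `l²(1 + l/R - 1/R²)` is a rational function of `l⁻¹`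
and `l⁴(lR - 1 + l⁻²)` that is continuous at `(0, 3)` and takes the value `1` there.
-/

open MeasureTheory ProbabilityTheory Filter Real Set Topology
open scoped NNReal

local notation "φ" => gaussianPDFReal 0 1

lemma gaussianPDFReal_zero_one (y : ℝ) : φ y = (√(2 * π))⁻¹ * exp (-(1 / 2) * y ^ 2) := by
  simp only [gaussianPDFReal, NNReal.coe_one, mul_one, sub_zero]
  ring_nf

lemma hasDerivAt_gaussianPDFReal_zero_one (y : ℝ) : HasDerivAt φ (-(y * φ y)) y := by
  have h := (((hasDerivAt_pow 2 y).const_mul (-(1 / 2) : ℝ)).exp).const_mul (√(2 * π))⁻¹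
  rw [funext gaussianPDFReal_zero_one]
  refine h.congr_deriv ?_
  norm_num
  ring

lemma integrable_pow_mul_gaussianPDFReal_zero_one (n : ℕ) : Integrable fun y => y ^ n * φ y := by
  refine ((integrable_rpow_mul_exp_neg_mul_sq (by norm_num : (0 : ℝ) < 1 / 2)
    (by linarith [n.cast_nonneg (α := ℝ)] : (-1 : ℝ) < n)).const_mul (√(2 * π))⁻¹).congr
    (ae_of_all _ fun y => ?_)
  simp only [rpow_natCast, gaussianPDFReal_zero_one]
  ring

lemma integrable_mul_gaussianPDFReal_zero_one : Integrable fun y => y * φ y := by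
  simpa using integrable_pow_mul_gaussianPDFReal_zero_one 1

lemma tendsto_pow_mul_gaussianPDFReal_zero_one (n : ℕ) :
    Tendsto (fun y => y ^ n * φ y) atTop (𝓝 0) := by
  have hexp : Tendsto (fun y : ℝ => exp (-(1 / 2) * y)) atTop (𝓝 0) :=
    tendsto_exp_atBot.comp (tendsto_id.const_mul_atTop_of_neg (by norm_num))
  have h := ((rpow_mul_exp_neg_mul_sq_isLittleO_exp_neg (by norm_num : (0 : ℝ) < 1 / 2) n
    ).isBigO.trans_tendsto hexp).const_mul (√(2 * π))⁻¹
  rw [mul_zero] at h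
  refine h.congr fun y => ?_
  simp only [rpow_natCast, gaussianPDFReal_zero_one]
  ring

lemma integral_Ioi_gaussianPDFReal_pos (μ : ℝ) {v : ℝ≥0} (hv : v ≠ 0) (l : ℝ) :
    0 < ∫ y in Ioi l, gaussianPDFReal μ v y := by
  rw [integral_pos_iff_support_of_nonneg (gaussianPDFReal_nonneg μ v)
    (integrable_gaussianPDFReal μ v).integrableOn]
  have : Function.support (gaussianPDFReal μ v) = univ :=
    Function.support_eq_univ fun y => (gaussianPDFReal_pos μ v y hv).ne'
  simp [this]

lemma integral_Ioi_mul_gaussianPDFReal_zero_one (l : ℝ) : ∫ y in Ioi l, y * φ y = φ l := by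
  have h := integral_Ioi_of_hasDerivAt_of_tendsto' (a := l) (f := fun y => -φ y)
    (fun y _ => (hasDerivAt_gaussianPDFReal_zero_one y).neg)
    (by simpa using integrable_mul_gaussianPDFReal_zero_one.integrableOn)
    (by simpa using (tendsto_pow_mul_gaussianPDFReal_zero_one 0).neg)
  simpa using h

lemma integral_Ioi_sq_mul_gaussianPDFReal_zero_one (l : ℝ) :
    ∫ y in Ioi l, y ^ 2 * φ y = l * φ l + ∫ y in Ioi l, φ y := by
  have hderiv (y : ℝ) : HasDerivAt (fun y => -(y * φ y)) (y ^ 2 * φ y - φ y) y := by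
    refine ((hasDerivAt_id y).mul (hasDerivAt_gaussianPDFReal_zero_one y)).neg.congr_deriv ?_
    simp only [id_eq]
    ring
  have h := integral_Ioi_of_hasDerivAt_of_tendsto' (a := l) (fun y _ => hderiv y)
    ((integrable_pow_mul_gaussianPDFReal_zero_one 2).sub
      (integrable_gaussianPDFReal 0 1)).integrableOn
    (by simpa using (tendsto_pow_mul_gaussianPDFReal_zero_one 1).neg)
  rw [integral_sub (integrable_pow_mul_gaussianPDFReal_zero_one 2).integrableOn
    (integrable_gaussianPDFReal 0 1).integrableOn] at h
  linarith

lemma integral_Ioi_sub_mul_gaussianPDFReal_zero_one (l : ℝ) :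
    ∫ y in Ioi l, (y - l) * φ y = φ l - l * ∫ y in Ioi l, φ y := by
  simp_rw [sub_mul]
  rw [integral_sub integrable_mul_gaussianPDFReal_zero_one.integrableOn
      ((integrable_gaussianPDFReal 0 1).const_mul l).integrableOn, integral_const_mul,
    integral_Ioi_mul_gaussianPDFReal_zero_one]

lemma integral_Ioi_sub_sq_mul_gaussianPDFReal_zero_one (l : ℝ) :
    ∫ y in Ioi l, (y - l) ^ 2 * φ y = (1 + l ^ 2) * (∫ y in Ioi l, φ y) - l * φ l := by
  have h2 := integrable_pow_mul_gaussianPDFReal_zero_one 2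
  have h1 := integrable_mul_gaussianPDFReal_zero_one.const_mul (2 * l)
  have h21 : Integrable fun y => y ^ 2 * φ y - 2 * l * (y * φ y) := h2.sub h1
  have hexpand (y : ℝ) :
      (y - l) ^ 2 * φ y = (y ^ 2 * φ y - 2 * l * (y * φ y)) + l ^ 2 * φ y := by
    ring
  simp_rw [hexpand]
  rw [integral_add h21.integrableOn ((integrable_gaussianPDFReal 0 1).const_mul _).integrableOn,
    integral_sub h2.integrableOn h1.integrableOn, integral_const_mul, integral_const_mul,
    integral_Ioi_sq_mul_gaussianPDFReal_zero_one, integral_Ioi_mul_gaussianPDFReal_zero_one]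
  ring

noncomputable def millsRatio (l : ℝ) : ℝ := (∫ y in Ioi l, φ y) / φ l

theorem tail_overshoot_variance_eq (l : ℝ) :
    (∫ y in Ioi l, (y - l) ^ 2 * φ y) / (∫ y in Ioi l, φ y) -
        ((∫ y in Ioi l, (y - l) * φ y) / ∫ y in Ioi l, φ y) ^ 2 =
      1 + l * (millsRatio l)⁻¹ - (millsRatio l)⁻¹ ^ 2 := by
  have hT := (integral_Ioi_gaussianPDFReal_pos 0 one_ne_zero l).ne'
  rw [integral_Ioi_sub_sq_mul_gaussianPDFReal_zero_one,
    integral_Ioi_sub_mul_gaussianPDFReal_zero_one, millsRatio, inv_div]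
  field_simp
  ring

section MillsBounds

variable {P P' : ℝ → ℝ} {l : ℝ}

lemma hasDerivAt_neg_gaussianPDFReal_zero_one_mul {y : ℝ} (hP : HasDerivAt P (P' y) y) :
    HasDerivAt (fun y => -(φ y * P y)) (φ y * (y * P y - P' y)) y :=
  ((hasDerivAt_gaussianPDFReal_zero_one y).mul hP).neg.congr_deriv (by ring)

lemma integral_Ioi_gaussianPDFReal_zero_one_mul_eq_of_hasDerivAt
    (hP : ∀ y ∈ Ici l, HasDerivAt P (P' y) y) (hP_lim : Tendsto P atTop (𝓝 0))
    (hnonneg : ∀ y ∈ Ioi l, 0 ≤ y * P y - P' y) :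
    IntegrableOn (fun y => φ y * (y * P y - P' y)) (Ioi l) ∧
      ∫ y in Ioi l, φ y * (y * P y - P' y) = φ l * P l := by
  have hderiv y (hy : y ∈ Ici l) := hasDerivAt_neg_gaussianPDFReal_zero_one_mul (hP y hy)
  have hlim : Tendsto (fun y => -(φ y * P y)) atTop (𝓝 0) := by
    simpa using ((tendsto_pow_mul_gaussianPDFReal_zero_one 0).mul hP_lim).neg
  have hpos y (hy : y ∈ Ioi l) : 0 ≤ φ y * (y * P y - P' y) :=
    mul_nonneg (gaussianPDFReal_nonneg 0 1 y) (hnonneg y hy)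
  refine ⟨integrableOn_Ioi_deriv_of_nonneg' hderiv hpos hlim, ?_⟩
  rw [integral_Ioi_of_hasDerivAt_of_nonneg' hderiv hpos hlim]
  ring

lemma integral_Ioi_gaussianPDFReal_zero_one_le_of_hasDerivAt
    (hP : ∀ y ∈ Ici l, HasDerivAt P (P' y) y) (hP_lim : Tendsto P atTop (𝓝 0))
    (hle : ∀ y ∈ Ioi l, 1 ≤ y * P y - P' y) :
    ∫ y in Ioi l, φ y ≤ φ l * P l := by
  obtain ⟨hint, heq⟩ := integral_Ioi_gaussianPDFReal_zero_one_mul_eq_of_hasDerivAt hP hP_lim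
    fun y hy => zero_le_one.trans (hle y hy)
  rw [← heq]
  exact setIntegral_mono_on (integrable_gaussianPDFReal 0 1).integrableOn hint measurableSet_Ioi
    fun y hy => le_mul_of_one_le_right (gaussianPDFReal_nonneg 0 1 y) (hle y hy)

lemma le_integral_Ioi_gaussianPDFReal_zero_one_of_hasDerivAt
    (hP : ∀ y ∈ Ici l, HasDerivAt P (P' y) y) (hP_lim : Tendsto P atTop (𝓝 0))
    (hnonneg : ∀ y ∈ Ioi l, 0 ≤ y * P y - P' y)
    (hle : ∀ y ∈ Ioi l, y * P y - P' y ≤ 1) :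
    φ l * P l ≤ ∫ y in Ioi l, φ y := by
  obtain ⟨hint, heq⟩ :=
    integral_Ioi_gaussianPDFReal_zero_one_mul_eq_of_hasDerivAt hP hP_lim hnonneg
  rw [← heq]
  exact setIntegral_mono_on hint (integrable_gaussianPDFReal 0 1).integrableOn measurableSet_Ioi
    fun y hy => mul_le_of_le_one_right (gaussianPDFReal_nonneg 0 1 y) (hle y hy)

end MillsBounds

lemma hasDerivAt_inv_pow (k : ℕ) {y : ℝ} (hy : y ≠ 0) :
    HasDerivAt (fun y => y⁻¹ ^ k) (-(k * y⁻¹ ^ (k + 1))) y := by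
  refine ((hasDerivAt_inv hy).pow k).congr_deriv ?_
  rcases k with _ | k
  · simp
  · simp only [Nat.add_sub_cancel, pow_succ, inv_pow]
    field_simp

lemma millsRatio_le {l : ℝ} (hl : 0 < l) : millsRatio l ≤ l⁻¹ - l⁻¹ ^ 3 + 3 * l⁻¹ ^ 5 := by
  have hP y (hy : y ∈ Ici l) : HasDerivAt (fun y => y⁻¹ - y⁻¹ ^ 3 + 3 * y⁻¹ ^ 5)
      (-(y⁻¹ ^ 2) + 3 * y⁻¹ ^ 4 - 15 * y⁻¹ ^ 6) y := by
    have hy0 : y ≠ 0 := (hl.trans_le hy).ne'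
    refine (((hasDerivAt_inv hy0).fun_sub (hasDerivAt_inv_pow 3 hy0)).fun_add
      ((hasDerivAt_inv_pow 5 hy0).const_mul 3)).congr_deriv ?_
    simp only [inv_pow]
    field_simp
    ring
  have hinv : Tendsto (fun y : ℝ => y⁻¹) atTop (𝓝 0) := tendsto_inv_atTop_zero
  have hP_lim : Tendsto (fun y : ℝ => y⁻¹ - y⁻¹ ^ 3 + 3 * y⁻¹ ^ 5) atTop (𝓝 0) := by
    simpa using (hinv.sub (hinv.pow 3)).add ((hinv.pow 5).const_mul 3)
  have hkey y (hy : y ∈ Ioi l) : y * (y⁻¹ - y⁻¹ ^ 3 + 3 * y⁻¹ ^ 5) -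
      (-(y⁻¹ ^ 2) + 3 * y⁻¹ ^ 4 - 15 * y⁻¹ ^ 6) = 1 + 15 * y⁻¹ ^ 6 := by
    have hy0 : y ≠ 0 := (hl.trans hy).ne'
    simp only [inv_pow]
    field_simp
    ring
  have h := integral_Ioi_gaussianPDFReal_zero_one_le_of_hasDerivAt hP hP_lim fun y hy => by
    rw [hkey y hy]
    linarith [pow_pos (inv_pos.2 (hl.trans hy)) 6]
  rwa [millsRatio, div_le_iff₀' (gaussianPDFReal_pos 0 1 l one_ne_zero)]

lemma le_millsRatio {l : ℝ} (hl : 2 ≤ l) :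
    l⁻¹ - l⁻¹ ^ 3 + 3 * l⁻¹ ^ 5 - 15 * l⁻¹ ^ 7 ≤ millsRatio l := by
  have hl0 : 0 < l := by linarith
  have hP y (hy : y ∈ Ici l) : HasDerivAt (fun y => y⁻¹ - y⁻¹ ^ 3 + 3 * y⁻¹ ^ 5 - 15 * y⁻¹ ^ 7)
      (-(y⁻¹ ^ 2) + 3 * y⁻¹ ^ 4 - 15 * y⁻¹ ^ 6 + 105 * y⁻¹ ^ 8) y := by
    have hy0 : y ≠ 0 := (hl0.trans_le hy).ne'
    refine ((((hasDerivAt_inv hy0).fun_sub (hasDerivAt_inv_pow 3 hy0)).fun_add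
      ((hasDerivAt_inv_pow 5 hy0).const_mul 3)).fun_sub
      ((hasDerivAt_inv_pow 7 hy0).const_mul 15)).congr_deriv ?_
    simp only [inv_pow]
    field_simp
    ring
  have hinv : Tendsto (fun y : ℝ => y⁻¹) atTop (𝓝 0) := tendsto_inv_atTop_zero
  have hP_lim : Tendsto (fun y : ℝ => y⁻¹ - y⁻¹ ^ 3 + 3 * y⁻¹ ^ 5 - 15 * y⁻¹ ^ 7) atTop (𝓝 0) := by
    simpa using ((hinv.sub (hinv.pow 3)).add ((hinv.pow 5).const_mul 3)).sub
      ((hinv.pow 7).const_mul 15)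
  have hkey y (hy : y ∈ Ioi l) : y * (y⁻¹ - y⁻¹ ^ 3 + 3 * y⁻¹ ^ 5 - 15 * y⁻¹ ^ 7) -
      (-(y⁻¹ ^ 2) + 3 * y⁻¹ ^ 4 - 15 * y⁻¹ ^ 6 + 105 * y⁻¹ ^ 8) = 1 - 105 * y⁻¹ ^ 8 := by
    have hy0 : y ≠ 0 := (hl0.trans hy).ne'
    simp only [inv_pow]
    field_simp
    ring
  have hsmall y (hy : y ∈ Ioi l) : 0 ≤ 105 * y⁻¹ ^ 8 ∧ 105 * y⁻¹ ^ 8 ≤ 1 := by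
    have hy2 : 2 ≤ y := hl.trans hy.out.le
    have : y⁻¹ ^ 8 ≤ 2⁻¹ ^ 8 := by gcongr
    constructor <;> [positivity; linarith]
  have h := le_integral_Ioi_gaussianPDFReal_zero_one_of_hasDerivAt hP hP_lim
    (fun y hy => by rw [hkey y hy]; linarith [hsmall y hy])
    (fun y hy => by rw [hkey y hy]; linarith [hsmall y hy])
  rwa [millsRatio, le_div_iff₀' (gaussianPDFReal_pos 0 1 l one_ne_zero)]

theorem tendsto_millsRatio_expansion :
    Tendsto (fun l => l ^ 4 * (l * millsRatio l - 1 + l⁻¹ ^ 2)) atTop (𝓝 3) := by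
  have hinv : Tendsto (fun l : ℝ => l⁻¹) atTop (𝓝 0) := tendsto_inv_atTop_zero
  have hlower : Tendsto (fun l : ℝ => 3 - 15 * l⁻¹ ^ 2) atTop (𝓝 3) := by
    simpa using (hinv.pow 2).const_mul 15 |>.const_sub 3
  refine tendsto_of_tendsto_of_tendsto_of_le_of_le' hlower tendsto_const_nhds ?_ ?_ <;>
    filter_upwards [eventually_ge_atTop 2] with l hl <;> have hl0 : l ≠ 0 := by positivity
  · calc 3 - 15 * l⁻¹ ^ 2
        = l ^ 4 * (l * (l⁻¹ - l⁻¹ ^ 3 + 3 * l⁻¹ ^ 5 - 15 * l⁻¹ ^ 7) - 1 + l⁻¹ ^ 2) := by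
          field_simp; ring
      _ ≤ l ^ 4 * (l * millsRatio l - 1 + l⁻¹ ^ 2) := by gcongr; exact le_millsRatio hl
  · calc l ^ 4 * (l * millsRatio l - 1 + l⁻¹ ^ 2)
        ≤ l ^ 4 * (l * (l⁻¹ - l⁻¹ ^ 3 + 3 * l⁻¹ ^ 5) - 1 + l⁻¹ ^ 2) := by
          gcongr; exact millsRatio_le (by positivity)
      _ = 3 := by field_simp; ring

lemma tendsto_sq_mul_one_add_mul_inv_sub_inv_sq {R : ℝ → ℝ}
    (hR : Tendsto (fun l => l ^ 4 * (l * R l - 1 + l⁻¹ ^ 2)) atTop (𝓝 3)) :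
    Tendsto (fun l => l ^ 2 * (1 + l * (R l)⁻¹ - (R l)⁻¹ ^ 2)) atTop (𝓝 1) := by
  -- `F (e, u) = l²(1 + l/R - 1/R²)` for `u = l⁻¹`, `e = l⁴(lR - 1 + u²)`, as `lR = 1 - u² + u⁴e`
  let F : ℝ × ℝ → ℝ := fun p =>
    ((p.2 ^ 2 * p.1 - 1) * (2 - p.2 ^ 2 + p.2 ^ 4 * p.1) + p.1) / (1 - p.2 ^ 2 + p.2 ^ 4 * p.1) ^ 2
  have hF : ContinuousAt F (3, 0) := by fun_prop (disch := norm_num)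
  have hlim := hF.tendsto.comp (hR.prodMk_nhds tendsto_inv_atTop_zero)
  rw [show F (3, 0) = 1 by norm_num [F]] at hlim
  refine hlim.congr' ?_
  filter_upwards [eventually_gt_atTop 1, hR.eventually (lt_mem_nhds three_pos)] with l hl he
  have hl0 : l ≠ 0 := by positivity
  have hR0 : R l ≠ 0 := by
    rintro h
    rw [h] at he
    field_simp at he
    have : 1 < l ^ 2 := by nlinarith
    nlinarith
  have hD : 1 - l⁻¹ ^ 2 + l⁻¹ ^ 4 * (l ^ 4 * (l * R l - 1 + l⁻¹ ^ 2)) = l * R l := by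
    field_simp
    ring
  simp only [Function.comp_apply, F, hD]
  field_simp
  ring

/-- **Asymptotics of the Gaussian conditional overshoot variance.**
With `φ` the standard Gaussian density and conditional expectations
`E[ψ(X) | X > l] = (∫_l^∞ ψ(y) φ(y) dy)/(∫_l^∞ φ(y) dy)`, the conditional
variance of the overshoot satisfies `l² · Var(X − l | X > l) → 1` as
`l → ∞`; i.e. the conditional overshoot variance is asymptotically `l⁻²`. -/
theorem gaussian_conditional_overshoot_variance :
    Tendsto (fun l : ℝ =>
        l ^ 2 *
          ((∫ y in Set.Ioi l, (y - l) ^ 2 * gaussianPDFReal 0 1 y) /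
              (∫ y in Set.Ioi l, gaussianPDFReal 0 1 y) -
            ((∫ y in Set.Ioi l, (y - l) * gaussianPDFReal 0 1 y) /
              ∫ y in Set.Ioi l, gaussianPDFReal 0 1 y) ^ 2))
      atTop (nhds 1) :=
  (tendsto_sq_mul_one_add_mul_inv_sub_inv_sq tendsto_millsRatio_expansion).congr fun l => by
    rw [tail_overshoot_variance_eq]
end

section
/- Fix constants κ > 0 and α ∈ ℝ. For b sufficiently large, the equation κ l^α e^l = b has a unique solution l*(b) among l > max(1, |α|), and l*(b) → ∞ as b → ∞. Define the iteration l⁽⁰⁾(b) = log b and l⁽ⁿ⁺¹⁾(b) = l⁽ⁿ⁾(b) − log(κ (l⁽ⁿ⁾(b))^α e^{l⁽ⁿ⁾(b)}) + log b = log b − log κ − α log l⁽ⁿ⁾(b). Then two iterations already achieve accuracy o(1/log b): lim_{b → ∞} (log b) · |l⁽²⁾(b) − l*(b)| = 0. -/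
/-!
With `t = log b` the equation reads `logModel κ α ℓ = t`, where
`logModel κ α ℓ = log κ + α log ℓ + ℓ` is strictly increasing for `ℓ ≥ max 1 |α|` (its
derivative is `1 + α / ℓ`), and the iteration is `l ↦ t - log κ - α log l`, which fixes
`ℓ = l*(b)`. As `log` is `1/c`-Lipschitz on `[c, ∞)` and `t`, `ℓ` and the first iterate all
exceed `ℓ / 2`, each step multiplies the error by at most `2|α| / ℓ`. Since
`t - ℓ = log κ + α log ℓ = o(ℓ)`, two steps leave an error `O(α² |t - ℓ| / ℓ²) = o(1 / t)`.
-/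

open Filter Real Set Topology Asymptotics

lemma Real.abs_log_sub_log_le_div {c x y : ℝ} (hc : 0 < c) (hx : c ≤ x) (hy : c ≤ y) :
    |log x - log y| ≤ |x - y| / c := by
  have hderiv : ∀ z ∈ Ici c, ‖deriv log z‖ ≤ c⁻¹ := fun z hz => by
    rw [deriv_log, norm_inv, norm_of_nonneg (hc.trans_le hz).le]
    exact inv_anti₀ hc hz
  have := (convex_Ici c).norm_image_sub_le_of_norm_deriv_le
    (fun z hz => differentiableAt_log (hc.trans_le hz).ne') hderiv hy hx
  simpa [div_eq_inv_mul] using this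

noncomputable section

/-- `logModel κ α l = log (κ * l ^ α * exp l)` for `κ, l > 0`. -/
def logModel (κ α l : ℝ) : ℝ := log κ + α * log l + l

/-- The step `l⁽ⁿ⁾ ↦ l⁽ⁿ⁺¹⁾` of the iteration, with `t = log b`. -/
def logStep (κ α t l : ℝ) : ℝ := t - log κ - α * log l

variable {κ α : ℝ}

lemma log_mul_rpow_mul_exp (hκ : 0 < κ) {l : ℝ} (hl : 0 < l) :
    log (κ * l ^ α * exp l) = logModel κ α l := by
  rw [log_mul (by positivity) (exp_pos l).ne', log_mul hκ.ne' (by positivity), log_rpow hl,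
    log_exp, logModel]

lemma mul_rpow_mul_exp_eq_iff (hκ : 0 < κ) {l b : ℝ} (hl : 0 < l) (hb : 0 < b) :
    κ * l ^ α * exp l = b ↔ logModel κ α l = log b := by
  rw [← log_mul_rpow_mul_exp hκ hl]
  exact ⟨congrArg log, fun h => log_injOn_pos (mem_Ioi.2 (by positivity)) hb h⟩

lemma logStep_logModel_self (κ α l : ℝ) : logStep κ α (logModel κ α l) l = l := by
  rw [logStep, logModel]; ring

lemma continuousOn_logModel (κ α : ℝ) : ContinuousOn (logModel κ α) (Ioi 0) :=
  ((continuousOn_const.add (continuousOn_const.mul continuousOn_log)).add continuousOn_id).mono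
    fun _ hx => ne_of_gt hx

lemma strictMonoOn_logModel {c : ℝ} (hc : 0 < c) (hαc : |α| ≤ c) :
    StrictMonoOn (logModel κ α) (Ici c) := by
  refine strictMonoOn_of_deriv_pos (convex_Ici c)
    ((continuousOn_logModel κ α).mono fun _ hx => hc.trans_le hx) fun x hx => ?_
  rw [interior_Ici] at hx
  have hx0 : 0 < x := hc.trans hx
  have hderiv : HasDerivAt (logModel κ α) (α * x⁻¹ + 1) x :=
    (((hasDerivAt_log hx0.ne').const_mul α).const_add (log κ)).add (hasDerivAt_id x)
  rw [hderiv.deriv]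
  have : |α * x⁻¹| < 1 := by
    rw [abs_mul, abs_inv, abs_of_pos hx0, ← div_eq_mul_inv, div_lt_one hx0]
    exact hαc.trans_lt hx
  linarith [neg_abs_le (α * x⁻¹)]

lemma tendsto_logModel_sub_div_atTop (κ α : ℝ) :
    Tendsto (fun l => (logModel κ α l - l) / l) atTop (𝓝 0) := by
  have : (fun l => logModel κ α l - l) =o[atTop] id :=
    ((isLittleO_const_id_atTop (log κ)).add (isLittleO_log_id_atTop.const_mul_left α)).congr_left
      fun l => by simp only [logModel]; ring
  exact this.tendsto_div_nhds_zero

lemma tendsto_logModel_atTop (κ α : ℝ) : Tendsto (logModel κ α) atTop atTop := by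
  have h := (tendsto_logModel_sub_div_atTop κ α).eventually
    (Ioi_mem_nhds (by norm_num : (-1 / 2 : ℝ) < 0))
  refine tendsto_atTop_mono' atTop ?_ (tendsto_id.const_mul_atTop (by norm_num : (0 : ℝ) < 1 / 2))
  filter_upwards [h, eventually_gt_atTop 0] with l hl hl0
  rw [lt_div_iff₀ hl0] at hl
  simp only [id]; linarith

/-- The solution `l ≥ c` of `logModel κ α l = t`; a junk value when there is none. -/
def logModelInv (κ α c t : ℝ) : ℝ := Function.invFunOn (logModel κ α) (Ici c) t

lemma logModelInv_spec {c t : ℝ} (hc : 0 < c) (ht : logModel κ α c ≤ t) :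
    c ≤ logModelInv κ α c t ∧ logModel κ α (logModelInv κ α c t) = t :=
  Function.invFunOn_pos (intermediate_value_Ici
    ((continuousOn_logModel κ α).mono fun _ hx => hc.trans_le hx) (tendsto_logModel_atTop κ α) ht)

section Inverse

variable {c : ℝ} (hc : 0 < c) (hαc : |α| ≤ c)
include hc hαc

lemma logModelInv_logModel {l : ℝ} (hl : c ≤ l) : logModelInv κ α c (logModel κ α l) = l :=
  have hmono := strictMonoOn_logModel (κ := κ) hc hαc
  have hspec := logModelInv_spec hc (hmono.monotoneOn self_mem_Ici hl hl)
  hmono.injOn hspec.1 hl hspec.2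

lemma tendsto_logModelInv_atTop : Tendsto (logModelInv κ α c) atTop atTop := by
  have hmono := strictMonoOn_logModel (κ := κ) hc hαc
  refine tendsto_atTop.2 fun N => ?_
  filter_upwards [eventually_gt_atTop (logModel κ α (max N c))] with t ht
  obtain ⟨hinv, heq⟩ := logModelInv_spec hc
    ((hmono.monotoneOn self_mem_Ici (le_max_right N c) (le_max_right N c)).trans ht.le)
  refine le_of_max_le_left (b := c) (not_lt.1 fun hlt => ?_)
  have := hmono hinv (le_max_right N c) hlt
  linarith

end Inverse

lemma abs_logStep_sub_logStep_le {c t x y : ℝ} (hc : 0 < c) (hx : c ≤ x) (hy : c ≤ y) :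
    |logStep κ α t x - logStep κ α t y| ≤ |α| / c * |x - y| := by
  have hlog := abs_log_sub_log_le_div hc hy hx
  calc |logStep κ α t x - logStep κ α t y| = |α| * |log y - log x| := by
        rw [logStep, logStep, ← abs_mul]; ring_nf
    _ ≤ |α| * (|y - x| / c) := by gcongr
    _ = |α| / c * |x - y| := by rw [abs_sub_comm]; ring

lemma abs_logStep_logStep_sub_le {c t ℓ : ℝ} (hc : 0 < c) (hfix : logStep κ α t ℓ = ℓ)
    (ht : c ≤ t) (hℓ : c ≤ ℓ) (hstep : c ≤ logStep κ α t t) :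
    |logStep κ α t (logStep κ α t t) - ℓ| ≤ (|α| / c) ^ 2 * |t - ℓ| := by
  calc |logStep κ α t (logStep κ α t t) - ℓ|
      = |logStep κ α t (logStep κ α t t) - logStep κ α t ℓ| := by rw [hfix]
    _ ≤ |α| / c * |logStep κ α t t - ℓ| := abs_logStep_sub_logStep_le hc hstep hℓ
    _ = |α| / c * |logStep κ α t t - logStep κ α t ℓ| := by rw [hfix]
    _ ≤ |α| / c * (|α| / c * |t - ℓ|) := by gcongr; exact abs_logStep_sub_logStep_le hc ht hℓ
    _ = (|α| / c) ^ 2 * |t - ℓ| := by ring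

lemma tendsto_logModel_mul_abs_logStep_logStep_sub (κ α : ℝ) :
    Tendsto (fun ℓ => logModel κ α ℓ *
      |logStep κ α (logModel κ α ℓ) (logStep κ α (logModel κ α ℓ) (logModel κ α ℓ)) - ℓ|)
      atTop (𝓝 0) := by
  set ρ : ℝ → ℝ := fun ℓ => (logModel κ α ℓ - ℓ) / ℓ
  have hρ : Tendsto ρ atTop (𝓝 0) := tendsto_logModel_sub_div_atTop κ α
  have hbound : Tendsto (fun ℓ => 4 * α ^ 2 * ((1 + ρ ℓ) * |ρ ℓ|)) atTop (𝓝 0) := by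
    simpa using ((tendsto_const_nhds.add hρ).mul hρ.abs).const_mul (4 * α ^ 2)
  refine squeeze_zero_norm' ?_ hbound
  filter_upwards [hρ.abs.eventually (gt_mem_nhds (by norm_num : |(0 : ℝ)| < 1 / 2)),
    (hρ.abs.const_mul (2 * |α|)).eventually (gt_mem_nhds (by simp : 2 * |α| * |(0 : ℝ)| < 1)),
    eventually_ge_atTop 2] with ℓ hρ_half hρ_α hℓ
  set t := logModel κ α ℓ
  have hdiff : t - ℓ = ℓ * ρ ℓ := by simp only [ρ, t]; field_simp
  have hℓt : ℓ / 2 ≤ t := by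
    have := neg_abs_le (ρ ℓ)
    nlinarith
  have hℓ0 : 0 < ℓ / 2 := by positivity
  have hfix : logStep κ α t ℓ = ℓ := logStep_logModel_self κ α ℓ
  have habs : |α| / (ℓ / 2) * |t - ℓ| = 2 * |α| * |ρ ℓ| := by
    rw [hdiff, abs_mul, abs_of_pos (by positivity : 0 < ℓ)]; field_simp
  have hℓℓ : ℓ / 2 ≤ ℓ := (half_lt_self (by positivity)).le
  have hstep : ℓ / 2 ≤ logStep κ α t t := by
    have hfirst := abs_logStep_sub_logStep_le (κ := κ) (α := α) (t := t) hℓ0 hℓt hℓℓ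
    rw [hfix, habs] at hfirst
    linarith [neg_abs_le (logStep κ α t t - ℓ)]
  have ht0 : 0 ≤ t := by linarith
  calc ‖t * |logStep κ α t (logStep κ α t t) - ℓ|‖
        = t * |logStep κ α t (logStep κ α t t) - ℓ| := by
        rw [Real.norm_eq_abs, abs_mul, abs_abs, abs_of_nonneg ht0]
    _ ≤ t * ((|α| / (ℓ / 2)) ^ 2 * |t - ℓ|) := by
        gcongr
        exact abs_logStep_logStep_sub_le hℓ0 hfix hℓt hℓℓ hstep
    _ = 4 * α ^ 2 * ((1 + ρ ℓ) * |ρ ℓ|) := by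
        have ht : t = ℓ * (1 + ρ ℓ) := by linarith
        rw [hdiff, ht, abs_mul, abs_of_pos (by positivity : 0 < ℓ), div_pow, sq_abs]
        field_simp
        ring

end

/-- **Two iterations of Algorithm 2 suffice.**
For `κ > 0` and `α ∈ ℝ`, for `b` large the equation `κ l^α e^l = b` has a
unique solution `l*(b)` among `l > max(1, |α|)`, and `l*(b) → ∞` as
`b → ∞`.  The iteration `l⁽⁰⁾ = log b`,
`l⁽ⁿ⁺¹⁾ = log b − log κ − α log l⁽ⁿ⁾` satisfies
`(log b) · |l⁽²⁾(b) − l*(b)| → 0`, i.e. two iterations already achieve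
accuracy `o(1/log b)`. -/
theorem two_newton_iterations_suffice (κ α : ℝ) (hκ : 0 < κ) :
    ∃ b₀ : ℝ, ∃ L : ℝ → ℝ,
      (∀ b ≥ b₀,
        max 1 |α| < L b ∧
        κ * L b ^ α * Real.exp (L b) = b ∧
        ∀ l : ℝ, max 1 |α| < l → κ * l ^ α * Real.exp l = b → l = L b) ∧
      Tendsto L atTop atTop ∧
      Tendsto (fun b =>
          Real.log b *
            |(Real.log b - Real.log κ -
                α * Real.log (Real.log b - Real.log κ -
                  α * Real.log (Real.log b))) - L b|)
        atTop (nhds 0) := by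
  set m := max 1 |α|
  have hm : 0 < m := zero_lt_one.trans_le (le_max_left _ _)
  have hαm : |α| ≤ m := le_max_right _ _
  have hL := tendsto_logModelInv_atTop (κ := κ) hm hαm
  have hspec : ∀ b, exp (logModel κ α m) ≤ b →
      m ≤ logModelInv κ α m (log b) ∧ logModel κ α (logModelInv κ α m (log b)) = log b :=
    fun b hb => logModelInv_spec hm ((le_log_iff_exp_le ((exp_pos _).trans_le hb)).2 hb)
  refine ⟨exp (logModel κ α m + 1), fun b => logModelInv κ α m (log b), fun b hb => ?_,
    hL.comp tendsto_log_atTop, ?_⟩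
  · have hb0 : 0 < b := (exp_pos _).trans_le hb
    obtain ⟨hmL, hLb⟩ := hspec b ((exp_le_exp.2 (by linarith)).trans hb)
    have hlogb : logModel κ α m + 1 ≤ log b := (le_log_iff_exp_le hb0).2 hb
    refine ⟨hmL.lt_of_ne fun h => ?_, (mul_rpow_mul_exp_eq_iff hκ (hm.trans_le hmL) hb0).2 hLb,
      fun l hl hlb => ?_⟩
    · rw [← h] at hLb
      linarith
    · dsimp only
      rw [← (mul_rpow_mul_exp_eq_iff hκ (hm.trans hl) hb0).1 hlb, logModelInv_logModel hm hαm hl.le]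
  · refine ((tendsto_logModel_mul_abs_logStep_logStep_sub κ α).comp
      (hL.comp tendsto_log_atTop)).congr' ?_
    filter_upwards [eventually_ge_atTop (exp (logModel κ α m))] with b hb
    simp only [Function.comp, (hspec b hb).2, logStep]
end

section
/- Fix R > 0 and x₀ ∈ (0, 1), and let C(x) = exp(−x²/R²). For each l > 0, let u_l be the solution of the one-dimensional boundary value problem −(e^{−ξ_l(x)} u_l′(x))′ = 1 on (0,1) with u_l(0) = u_l(1) = 0, where ξ_l(x) = l · C(x − x₀); explicitly, u_l′(x) = e^{ξ_l(x)} (c_l − x) with c_l = (∫₀¹ y e^{ξ_l(y)} dy)/(∫₀¹ e^{ξ_l(y)} dy). Then there exist constants κ > 0 and α ∈ ℝ such that lim_{l → ∞} (sup_{x ∈ [0,1]} |u_l′(x)|) / (l^α e^l) = κ; that is, the maximal strain satisfies sup_{[0,1]} |u_l′| ∼ κ l^α e^l as l → ∞. -/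
/-!
Write `w_l = e^{ξ_l}`. The function `(y - x₀) w_l(y)` is odd about `x₀`, so in the numerator of
`c_l - x₀ = ∫ (y - x₀) w_l / ∫ w_l` everything cancels except the contribution of the points at
distance at least `m = min x₀ (1 - x₀)` from the peak; hence `c_l - x₀` is exponentially small,
and `sup |u_l'|` agrees with `sup_x w_l(x) |x - x₀|` up to `e^l |c_l - x₀| = o(l^{-1/2} e^l)`.
Near the peak `1 - e^{-s} ≈ s`, so `w_l(x) |x - x₀| ≈ e^l |x - x₀| e^{-l (x - x₀)² / R²}`, whose
maximum `e^l R / √(2 e l)` is attained at `|x - x₀| = R / √(2 l)`. Hence `α = -1/2` and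
`κ = R / √(2e)`.
-/

open MeasureTheory Filter Real Set Topology

theorem intervalIntegral.integral_eq_zero_of_odd {E : Type*} [NormedAddCommGroup E]
    [NormedSpace ℝ E] {f : ℝ → E} (hf : ∀ x, f (-x) = -f x) (a : ℝ) :
    ∫ x in -a..a, f x = 0 := by
  have h := intervalIntegral.integral_comp_neg (a := -a) (b := a) f
  simp only [hf, intervalIntegral.integral_neg, neg_neg] at h
  have h2 : (2 : ℝ) • ∫ x in -a..a, f x = 0 := by
    rw [two_smul]; nth_rewrite 1 [← h]; exact neg_add_cancel _
  exact (smul_eq_zero.mp h2).resolve_left two_ne_zero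

lemma Real.sub_sq_le_one_sub_exp_neg {s : ℝ} (hs₀ : 0 ≤ s) (hs₁ : s ≤ 1) :
    s - s ^ 2 ≤ 1 - exp (-s) := by
  have h := Real.abs_exp_sub_one_sub_id_le (x := -s) (by rwa [abs_neg, abs_of_nonneg hs₀])
  rw [neg_sq] at h
  linarith [(abs_le.mp h).2]

lemma Real.mul_exp_neg_mul_sq_le {a : ℝ} (ha : 0 < a) (t : ℝ) :
    t * exp (-(a * t ^ 2)) ≤ 1 / √(2 * exp 1 * a) := by
  set y := 2 * a * t ^ 2
  -- `e y ≤ e ^ y`: the tangent line of `exp` at `1`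
  have hy : exp 1 * y ≤ exp y := by
    have h := Real.add_one_le_exp (y - 1)
    rw [sub_add_cancel] at h
    calc exp 1 * y ≤ exp 1 * exp (y - 1) := by gcongr
      _ = exp y := by rw [← Real.exp_add, add_sub_cancel]
  rw [one_div, ← Real.sqrt_inv]
  refine (le_abs_self _).trans (Real.abs_le_sqrt ?_)
  rw [inv_eq_one_div, le_div_iff₀ (by positivity)]
  calc (t * exp (-(a * t ^ 2))) ^ 2 * (2 * exp 1 * a) = exp 1 * y * exp (-y) := by
        rw [mul_pow, ← Real.exp_nat_mul]; simp only [y]; ring_nf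
    _ ≤ exp y * exp (-y) := by gcongr
    _ = 1 := by rw [← Real.exp_add, add_neg_cancel, Real.exp_zero]

lemma Real.exp_mul_exp_neg_sq_mul_le {l δ τ : ℝ} (hl : 0 < l) (hδ₀ : 0 < δ) (hδ₁ : δ < 1)
    (hτ : 0 ≤ τ) :
    exp (l * exp (-τ ^ 2)) * τ ≤
      exp l * (1 / √(2 * exp 1 * (l * (1 - δ))) + τ * exp (-(l * (δ * (1 - δ))))) := by
  have hsplit : exp (l * exp (-τ ^ 2)) = exp l * exp (-(l * (1 - exp (-τ ^ 2)))) := by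
    rw [← Real.exp_add]; ring_nf
  rw [hsplit, mul_assoc]
  gcongr
  by_cases hτδ : τ ^ 2 ≤ δ
  · have hgap : (1 - δ) * τ ^ 2 ≤ 1 - exp (-τ ^ 2) := by
      nlinarith [Real.sub_sq_le_one_sub_exp_neg (sq_nonneg τ) (by linarith)]
    calc exp (-(l * (1 - exp (-τ ^ 2)))) * τ ≤ τ * exp (-(l * (1 - δ) * τ ^ 2)) := by
          rw [mul_comm]; exact mul_le_mul_of_nonneg_left (exp_le_exp.2 (by nlinarith)) hτ
      _ ≤ 1 / √(2 * exp 1 * (l * (1 - δ))) :=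
          Real.mul_exp_neg_mul_sq_le (by nlinarith) τ
      _ ≤ _ := le_add_of_nonneg_right (by positivity)
  · have hgap : δ * (1 - δ) ≤ 1 - exp (-τ ^ 2) := by
      have := Real.sub_sq_le_one_sub_exp_neg hδ₀.le hδ₁.le
      have : exp (-τ ^ 2) ≤ exp (-δ) := by gcongr; linarith
      nlinarith
    calc exp (-(l * (1 - exp (-τ ^ 2)))) * τ ≤ τ * exp (-(l * (δ * (1 - δ)))) := by
          rw [mul_comm]; gcongr
      _ ≤ _ := le_add_of_nonneg_left (by positivity)

lemma Real.rpow_neg_half_mul {x : ℝ} (hx : 0 ≤ x) (y : ℝ) : x ^ (-(1 / 2) : ℝ) * y = y / √x := by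
  rw [rpow_neg hx, ← sqrt_eq_rpow, inv_mul_eq_div]

namespace MaximalStrain

variable (R x₀ : ℝ)

-- `weight R x₀ l = e^{ξ_l}`, `centroid R x₀ l = c_l` and `maxStrain R x₀ l = sup_{[0,1]} |u_l'|`.
noncomputable def weight (l x : ℝ) : ℝ := exp (l * exp (-(x - x₀) ^ 2 / R ^ 2))

noncomputable def centroid (l : ℝ) : ℝ :=
  (∫ y in (0:ℝ)..1, y * weight R x₀ l y) / ∫ y in (0:ℝ)..1, weight R x₀ l y

noncomputable def maxStrain (l : ℝ) : ℝ :=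
  ⨆ x : Icc (0:ℝ) 1, |weight R x₀ l x * (centroid R x₀ l - x)|

variable {R x₀}

lemma weight_pos (l x : ℝ) : 0 < weight R x₀ l x := exp_pos _

@[fun_prop]
lemma continuous_weight (l : ℝ) : Continuous (weight R x₀ l) := by
  unfold weight; fun_prop

lemma weight_le_of_sq_le {l d x : ℝ} (hl : 0 ≤ l) (h : d ^ 2 ≤ (x - x₀) ^ 2) :
    weight R x₀ l x ≤ exp (l * exp (-d ^ 2 / R ^ 2)) := by
  unfold weight; gcongr

lemma le_weight_of_sq_le {l d x : ℝ} (hl : 0 ≤ l) (h : (x - x₀) ^ 2 ≤ d ^ 2) :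
    exp (l * exp (-d ^ 2 / R ^ 2)) ≤ weight R x₀ l x := by
  unfold weight; gcongr

lemma weight_le_exp {l : ℝ} (hl : 0 ≤ l) (x : ℝ) : weight R x₀ l x ≤ exp l := by
  simpa using weight_le_of_sq_le (R := R) (d := 0) hl (by simpa using sq_nonneg (x - x₀))

lemma integral_sub_mul_weight_symm (l m : ℝ) :
    ∫ y in x₀ - m..x₀ + m, (y - x₀) * weight R x₀ l y = 0 := by
  set f := fun t => t * exp (l * exp (-t ^ 2 / R ^ 2))
  have h := intervalIntegral.integral_comp_sub_right f (a := x₀ - m) (b := x₀ + m) x₀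
  simp only [sub_sub_cancel_left, add_sub_cancel_left] at h
  rw [← intervalIntegral.integral_eq_zero_of_odd (f := f) (fun t => by simp [f]) m, ← h]
  rfl

lemma abs_integral_sub_mul_weight_le {l m : ℝ} (hl : 0 ≤ l) (hm : 0 ≤ m) (hm₀ : m ≤ x₀)
    (hm₁ : m ≤ 1 - x₀) :
    |∫ y in (0:ℝ)..1, (y - x₀) * weight R x₀ l y| ≤ 2 * exp (l * exp (-m ^ 2 / R ^ 2)) := by
  set g := fun y => (y - x₀) * weight R x₀ l y
  set K := exp (l * exp (-m ^ 2 / R ^ 2))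
  have hgi : ∀ a b, IntervalIntegrable g volume a b := fun a b =>
    (by fun_prop : Continuous g).intervalIntegrable a b
  have hg : ∀ y ∈ Icc (0:ℝ) 1, m ≤ |y - x₀| → ‖g y‖ ≤ K := fun y hy hmy => by
    have hy₁ : |y - x₀| ≤ 1 := abs_le.2 ⟨by linarith [hy.1], by linarith [hy.2]⟩
    rw [Real.norm_eq_abs, abs_mul, abs_of_pos (weight_pos l y), ← one_mul K]
    exact mul_le_mul hy₁ (weight_le_of_sq_le hl (sq_le_sq.2 (by rwa [abs_of_nonneg hm])))
      (weight_pos l y).le zero_le_one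
  have hsplit : ∫ y in (0:ℝ)..1, g y =
      (∫ y in (0:ℝ)..x₀ - m, g y) + (∫ y in x₀ - m..x₀ + m, g y) + ∫ y in x₀ + m..1, g y := by
    rw [intervalIntegral.integral_add_adjacent_intervals (hgi _ _) (hgi _ _),
      intervalIntegral.integral_add_adjacent_intervals (hgi _ _) (hgi _ _)]
  have hleft : ‖∫ y in (0:ℝ)..x₀ - m, g y‖ ≤ K := by
    refine (intervalIntegral.norm_integral_le_of_norm_le_const (C := K) fun y hy => ?_).trans ?_
    · rw [uIoc_of_le (by linarith)] at hy
      exact hg y ⟨hy.1.le, by linarith [hy.2]⟩ (le_abs.2 (Or.inr (by linarith [hy.2])))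
    · exact mul_le_of_le_one_right (exp_pos _).le (abs_le.2 ⟨by linarith, by linarith⟩)
  have hright : ‖∫ y in x₀ + m..1, g y‖ ≤ K := by
    refine (intervalIntegral.norm_integral_le_of_norm_le_const (C := K) fun y hy => ?_).trans ?_
    · rw [uIoc_of_le (by linarith)] at hy
      exact hg y ⟨by linarith [hy.1], hy.2⟩ (le_abs.2 (Or.inl (by linarith [hy.1])))
    · exact mul_le_of_le_one_right (exp_pos _).le (abs_le.2 ⟨by linarith, by linarith⟩)
  rw [hsplit, integral_sub_mul_weight_symm, add_zero, two_mul]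
  exact (abs_add_le _ _).trans (add_le_add hleft hright)

lemma le_integral_weight {l r : ℝ} (hl : 0 ≤ l) (hr : 0 ≤ r) (hx₀ : 0 ≤ x₀) (hr₁ : x₀ + r ≤ 1) :
    r * exp (l * exp (-r ^ 2 / R ^ 2)) ≤ ∫ y in (0:ℝ)..1, weight R x₀ l y := by
  calc r * exp (l * exp (-r ^ 2 / R ^ 2))
      = ∫ _ in x₀..x₀ + r, exp (l * exp (-r ^ 2 / R ^ 2)) := by simp
    _ ≤ ∫ y in x₀..x₀ + r, weight R x₀ l y := by
        refine intervalIntegral.integral_mono_on (by linarith) (by simp)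
          ((continuous_weight l).intervalIntegrable _ _) fun y hy => ?_
        exact le_weight_of_sq_le hl (sq_le_sq' (by linarith [hy.1]) (by linarith [hy.2]))
    _ ≤ ∫ y in (0:ℝ)..1, weight R x₀ l y :=
        intervalIntegral.integral_mono_interval hx₀ (by linarith) hr₁
          (Eventually.of_forall fun y => (weight_pos l y).le)
          ((continuous_weight l).intervalIntegrable _ _)

lemma centroid_sub_eq (l : ℝ) :
    centroid R x₀ l - x₀ =
      (∫ y in (0:ℝ)..1, (y - x₀) * weight R x₀ l y) / ∫ y in (0:ℝ)..1, weight R x₀ l y := by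
  have hpos : 0 < ∫ y in (0:ℝ)..1, weight R x₀ l y :=
    intervalIntegral.intervalIntegral_pos_of_pos
      ((continuous_weight l).intervalIntegrable _ _) (weight_pos l) one_pos
  simp_rw [sub_mul]
  rw [intervalIntegral.integral_sub (Continuous.intervalIntegrable (by fun_prop) _ _)
      (Continuous.intervalIntegrable (by fun_prop) _ _), intervalIntegral.integral_const_mul,
    centroid, eq_div_iff hpos.ne', sub_mul, div_mul_cancel₀ _ hpos.ne']

lemma abs_centroid_sub_le {l m : ℝ} (hl : 0 ≤ l) (hm : 0 < m) (hm₀ : m ≤ x₀)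
    (hm₁ : m ≤ 1 - x₀) :
    |centroid R x₀ l - x₀| ≤
      4 / m * exp (-(l * (exp (-(m / 2) ^ 2 / R ^ 2) - exp (-m ^ 2 / R ^ 2)))) := by
  have hden := le_integral_weight (R := R) hl (half_pos hm).le (by linarith) (by linarith)
  rw [centroid_sub_eq, abs_div, abs_of_pos ((by positivity : (0:ℝ) < _).trans_le hden)]
  calc _ ≤ 2 * exp (l * exp (-m ^ 2 / R ^ 2)) / (m / 2 * exp (l * exp (-(m / 2) ^ 2 / R ^ 2))) :=
        div_le_div₀ (by positivity) (abs_integral_sub_mul_weight_le hl hm.le hm₀ hm₁)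
          (by positivity) hden
    _ = _ := by
        rw [mul_sub, neg_sub, Real.exp_sub]
        field_simp
        ring

lemma tendsto_sqrt_mul_abs_centroid_sub (hR : 0 < R) (hx₀ : x₀ ∈ Ioo 0 1) :
    Tendsto (fun l => √l * |centroid R x₀ l - x₀|) atTop (𝓝 0) := by
  set m := min x₀ (1 - x₀)
  have hm : 0 < m := lt_min hx₀.1 (by linarith [hx₀.2])
  set γ := exp (-(m / 2) ^ 2 / R ^ 2) - exp (-m ^ 2 / R ^ 2)
  have hγ : 0 < γ := sub_pos.2 (exp_lt_exp.2 (by gcongr; nlinarith))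
  have hlim : Tendsto (fun l : ℝ => 4 / m * (l ^ (1 / 2 : ℝ) * exp (-γ * l))) atTop (𝓝 0) := by
    simpa using (tendsto_rpow_mul_exp_neg_mul_atTop_nhds_zero _ _ hγ).const_mul (4 / m)
  refine squeeze_zero' (Eventually.of_forall fun l => by positivity) ?_ hlim
  filter_upwards [eventually_ge_atTop 0] with l hl
  rw [← Real.sqrt_eq_rpow, mul_left_comm, neg_mul, mul_comm γ]
  exact mul_le_mul_of_nonneg_left
    (abs_centroid_sub_le (R := R) hl hm (min_le_left _ _) (min_le_right _ _)) (sqrt_nonneg l)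

lemma weight_mul_abs_sub_le (hR : 0 < R) {l δ : ℝ} (hl : 0 < l) (hδ₀ : 0 < δ) (hδ₁ : δ < 1)
    (x : ℝ) :
    weight R x₀ l x * |x - x₀| ≤
      exp l * (R / √(2 * exp 1 * (l * (1 - δ))) + |x - x₀| * exp (-(l * (δ * (1 - δ))))) := by
  have h := Real.exp_mul_exp_neg_sq_mul_le hl hδ₀ hδ₁ (div_nonneg (abs_nonneg (x - x₀)) hR.le)
  rw [div_pow, sq_abs, ← neg_div] at h
  have h' := mul_le_mul_of_nonneg_left h hR.le
  calc weight R x₀ l x * |x - x₀|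
      = R * (exp (l * exp (-(x - x₀) ^ 2 / R ^ 2)) * (|x - x₀| / R)) := by
        rw [weight]; field_simp
    _ ≤ _ := h'
    _ = _ := by field_simp

lemma bddAbove_range_strain (l : ℝ) :
    BddAbove (range fun x : Icc (0:ℝ) 1 => |weight R x₀ l x * (centroid R x₀ l - x)|) :=
  (isCompact_range (by fun_prop)).bddAbove

lemma maxStrain_le (hR : 0 < R) (hx₀ : x₀ ∈ Icc 0 1) {l δ : ℝ} (hl : 0 < l) (hδ₀ : 0 < δ)
    (hδ₁ : δ < 1) :
    maxStrain R x₀ l ≤ exp l * (R / √(2 * exp 1 * (l * (1 - δ))) +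
      exp (-(l * (δ * (1 - δ)))) + |centroid R x₀ l - x₀|) := by
  unfold maxStrain
  refine Real.iSup_le (fun x => ?_) (by positivity)
  obtain ⟨x, hx⟩ := x
  have hx₁ : |x - x₀| ≤ 1 := abs_le.2 ⟨by linarith [hx.1, hx₀.2], by linarith [hx.2, hx₀.1]⟩
  have hw := weight_mul_abs_sub_le (x₀ := x₀) hR hl hδ₀ hδ₁ x
  have hc := weight_le_exp (R := R) (x₀ := x₀) hl.le x
  have htri : |centroid R x₀ l - x| ≤ |x - x₀| + |centroid R x₀ l - x₀| := by
    have := abs_sub_le (centroid R x₀ l) x₀ x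
    rw [abs_sub_comm x₀ x] at this; linarith
  have hE : |x - x₀| * exp (-(l * (δ * (1 - δ)))) ≤ exp (-(l * (δ * (1 - δ)))) :=
    mul_le_of_le_one_left (exp_pos _).le hx₁
  calc |weight R x₀ l x * (centroid R x₀ l - x)|
      ≤ weight R x₀ l x * |x - x₀| + weight R x₀ l x * |centroid R x₀ l - x₀| := by
        rw [abs_mul, abs_of_pos (weight_pos l x), ← mul_add]
        exact mul_le_mul_of_nonneg_left htri (weight_pos l x).le
    _ ≤ exp l * (R / √(2 * exp 1 * (l * (1 - δ))) + |x - x₀| * exp (-(l * (δ * (1 - δ)))))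
          + exp l * |centroid R x₀ l - x₀| := by gcongr
    _ ≤ _ := by rw [← mul_add]; gcongr

lemma le_maxStrain (hR : 0 < R) {l : ℝ} (hl : 0 < l) (hx₁ : x₀ + R / √(2 * l) ∈ Icc 0 1) :
    exp (l - 1 / 2) * (R / √(2 * l) - |centroid R x₀ l - x₀|) ≤ maxStrain R x₀ l := by
  set x₁ := x₀ + R / √(2 * l)
  have hw : exp (l - 1 / 2) ≤ weight R x₀ l x₁ := by
    refine le_trans ?_ (le_weight_of_sq_le (d := R / √(2 * l)) hl.le (by simp [x₁]))
    have hd : -(R / √(2 * l)) ^ 2 / R ^ 2 = -(2 * l)⁻¹ := by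
      rw [div_pow, Real.sq_sqrt (by positivity)]; field_simp
    rw [hd]
    gcongr
    calc l - 1 / 2 = l * (-(2 * l)⁻¹ + 1) := by field_simp; ring
      _ ≤ l * exp (-(2 * l)⁻¹) := by gcongr; exact Real.add_one_le_exp _
  have htri : R / √(2 * l) - |centroid R x₀ l - x₀| ≤ |centroid R x₀ l - x₁| := by
    have := abs_sub_le x₁ (centroid R x₀ l) x₀
    rw [abs_sub_comm x₁ (centroid R x₀ l), show x₁ - x₀ = R / √(2 * l) by ring] at this
    linarith [le_abs_self (R / √(2 * l))]
  calc _ ≤ exp (l - 1 / 2) * |centroid R x₀ l - x₁| := by gcongr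
    _ ≤ weight R x₀ l x₁ * |centroid R x₀ l - x₁| := by gcongr
    _ = |weight R x₀ l x₁ * (centroid R x₀ l - x₁)| := by
        rw [abs_mul, abs_of_pos (weight_pos l x₁)]
    _ ≤ maxStrain R x₀ l := le_ciSup (bddAbove_range_strain l) ⟨x₁, hx₁⟩

lemma eventually_le_maxStrain_div (hR : 0 < R) (hx₀ : x₀ ∈ Ioo 0 1) :
    ∀ᶠ l in atTop, exp (-(1 / 2)) * (R / √2 - √l * |centroid R x₀ l - x₀|) ≤
      maxStrain R x₀ l / (l ^ (-(1 / 2) : ℝ) * exp l) := by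
  have hsmall : Tendsto (fun l : ℝ => R / √(2 * l)) atTop (𝓝 0) := by
    simpa [div_eq_mul_inv] using (tendsto_inv_atTop_zero.comp
      (tendsto_sqrt_atTop.comp (tendsto_id.const_mul_atTop two_pos))).const_mul R
  filter_upwards [eventually_gt_atTop 0, hsmall.eventually (ge_mem_nhds (sub_pos.2 hx₀.2))]
    with l hl hRl
  rw [Real.rpow_neg_half_mul hl.le, le_div_iff₀ (by positivity)]
  calc _ = exp (l - 1 / 2) * (R / √(2 * l) - |centroid R x₀ l - x₀|) := by
        rw [sqrt_mul zero_le_two, sub_eq_add_neg l, exp_add]; field_simp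
    _ ≤ maxStrain R x₀ l := by
        refine le_maxStrain hR hl ⟨?_, by linarith⟩
        have : 0 < R / √(2 * l) := by positivity
        linarith [hx₀.1]

lemma maxStrain_div_le (hR : 0 < R) (hx₀ : x₀ ∈ Icc 0 1) {l : ℝ} (hl : 1 < l) :
    maxStrain R x₀ l / (l ^ (-(1 / 2) : ℝ) * exp l) ≤
      R / √(2 * exp 1 * (1 - 1 / √l)) + exp 1 * (√l * exp (-√l)) +
        √l * |centroid R x₀ l - x₀| := by
  have hsl : 1 < √l := by rwa [lt_sqrt zero_le_one, one_pow]
  have h := maxStrain_le (x₀ := x₀) (l := l) hR hx₀ (by linarith)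
    (one_div_pos.2 (by linarith : 0 < √l)) ((div_lt_one (by linarith)).2 hsl)
  rw [Real.rpow_neg_half_mul (by linarith), div_le_iff₀ (by positivity)]
  refine h.trans_eq ?_
  have hl' : √l * √l = l := mul_self_sqrt (by linarith)
  have hsplit : √(2 * exp 1 * (l * (1 - 1 / √l))) = √l * √(2 * exp 1 * (1 - 1 / √l)) := by
    rw [← sqrt_mul (by linarith)]; ring_nf
  have htail : exp (-(l * (1 / √l * (1 - 1 / √l)))) = exp 1 * exp (-√l) := by
    rw [← exp_add]; congr 1; field_simp; linear_combination (√l - 1) * hl'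
  rw [hsplit, htail]
  field_simp

theorem tendsto_maxStrain_div (hR : 0 < R) (hx₀ : x₀ ∈ Ioo 0 1) :
    Tendsto (fun l => maxStrain R x₀ l / (l ^ (-(1 / 2) : ℝ) * exp l)) atTop
      (𝓝 (R / √(2 * exp 1))) := by
  have hε := tendsto_sqrt_mul_abs_centroid_sub hR hx₀
  have hκ : R / √(2 * exp 1) = exp (-(1 / 2)) * (R / √2 - 0) := by
    rw [sub_zero, sqrt_mul zero_le_two, ← exp_half, exp_neg]; field_simp
  have hδ : Tendsto (fun l : ℝ => 1 / √l) atTop (𝓝 0) := by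
    simpa [Function.comp_def] using tendsto_inv_atTop_zero.comp tendsto_sqrt_atTop
  have hlower := ((tendsto_const_nhds (x := R / √2)).sub hε).const_mul (exp (-(1 / 2)))
  have hupper : Tendsto (fun l : ℝ => R / √(2 * exp 1 * (1 - 1 / √l)) +
      exp 1 * (√l * exp (-√l)) + √l * |centroid R x₀ l - x₀|) atTop
      (𝓝 (R / √(2 * exp 1 * (1 - 0)) + exp 1 * 0 + 0)) := by
    refine ((tendsto_const_nhds.div ((tendsto_const_nhds.mul (tendsto_const_nhds.sub hδ)).sqrt)
      (by positivity)).add (tendsto_const_nhds.mul ?_)).add hε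
    simpa [Function.comp_def] using
      (tendsto_pow_mul_exp_neg_atTop_nhds_zero 1).comp tendsto_sqrt_atTop
  rw [sub_zero, mul_one, mul_zero, add_zero, add_zero] at hupper
  rw [← hκ] at hlower
  exact tendsto_of_tendsto_of_tendsto_of_le_of_le' hlower hupper
    (eventually_le_maxStrain_div hR hx₀)
    ((eventually_gt_atTop 1).mono fun l hl => maxStrain_div_le hR (Ioo_subset_Icc_self hx₀) hl)

end MaximalStrain

/-- **Scaling relationship between the excursion level and the maximal
strain.**  For the deterministic conditional-mean profile
`ξ_l(x) = l · C(x − x₀)` with `C(x) = exp(−x²/R²)`, the solution of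
`−(e^{−ξ_l} u_l′)′ = 1` on `(0,1)` with `u_l(0) = u_l(1) = 0` has derivative
`u_l′(x) = e^{ξ_l(x)}(c_l − x)`, and there exist `κ > 0` and `α ∈ ℝ` such
that `sup_{[0,1]} |u_l′| / (l^α e^l) → κ` as `l → ∞`, i.e.
`sup_{[0,1]} |u_l′| ∼ κ l^α e^l`. -/
theorem maximal_strain_scaling (R : ℝ) (hR : 0 < R) (x₀ : ℝ)
    (hx₀ : x₀ ∈ Set.Ioo (0:ℝ) 1) :
    let C : ℝ → ℝ := fun x => Real.exp (-x ^ 2 / R ^ 2)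
    let ξ : ℝ → ℝ → ℝ := fun l x => l * C (x - x₀)
    let c : ℝ → ℝ := fun l =>
      (∫ y in (0:ℝ)..1, y * Real.exp (ξ l y)) / ∫ y in (0:ℝ)..1, Real.exp (ξ l y)
    let u' : ℝ → ℝ → ℝ := fun l x => Real.exp (ξ l x) * (c l - x)
    ∃ κ : ℝ, 0 < κ ∧ ∃ α : ℝ,
      Tendsto (fun l : ℝ =>
          (⨆ x : Set.Icc (0:ℝ) 1, |u' l x|) / (l ^ α * Real.exp l))
        atTop (nhds κ) :=
  ⟨R / √(2 * exp 1), by positivity, -(1 / 2), MaximalStrain.tendsto_maxStrain_div hR hx₀⟩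
end
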